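/- Let f : ℝⁿ → ℝ be continuous and coercive, let p(u) = inf{ f(λ) : 1ₙᵀλ = 1 + u }, let γ ∈ ℝ, and suppose (uⱼ) is a sequence with p(uⱼ) ≤ γ for all j and uⱼ → u. Then p(u) ≤ γ. -/
import Mathlib


open Filter

lemma global_lower_bound (n : ℕ) (f : (Fin n → ℝ) → ℝ) (hfc : Continuous f)
    (hcoercive : ∀ M : ℝ, ∃ R : ℝ, ∀ lam : Fin n → ℝ, R ≤ ‖lam‖ → M ≤ f lam) :
    ∃ B : ℝ, ∀ x, B ≤ f x := by
  obtain ⟨R, hR⟩ := hcoercive 0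
  have hcomp : IsCompact (Metric.closedBall (0 : Fin n → ℝ) (max R 0)) :=
    isCompact_closedBall _ _
  have hne : (Metric.closedBall (0 : Fin n → ℝ) (max R 0)).Nonempty :=
    ⟨0, Metric.mem_closedBall_self (le_max_right _ _)⟩
  obtain ⟨x₀, _, hmin⟩ := hcomp.exists_isMinOn hne hfc.continuousOn
  refine ⟨min (f x₀) 0, fun x => ?_⟩
  by_cases hx : R ≤ ‖x‖
  · exact le_trans (min_le_right _ _) (hR x hx)
  · push_neg at hx
    have hxm : x ∈ Metric.closedBall (0 : Fin n → ℝ) (max R 0) := by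
      rw [Metric.mem_closedBall, dist_zero_right]
      exact le_max_of_le_left hx.le
    exact le_trans (min_le_left _ _) (hmin hxm)

/-- Closedness lemma: if f is continuous and coercive,
p(u) = inf{f(λ) : 1ₙᵀλ = 1 + u}, p(uⱼ) ≤ γ for all j, and uⱼ → u, then
p(u) ≤ γ. -/
theorem perturbation_closedness_lemma (n : ℕ) (hn : 0 < n)
    (f : (Fin n → ℝ) → ℝ) (hfc : Continuous f)
    (hcoercive : ∀ M : ℝ, ∃ R : ℝ, ∀ lam : Fin n → ℝ, R ≤ ‖lam‖ → M ≤ f lam)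
    (γ : ℝ) (u : ℝ) (useq : ℕ → ℝ)
    (hle : ∀ j, sInf {y : ℝ | ∃ lam : Fin n → ℝ,
        (∑ i, lam i) = 1 + useq j ∧ f lam = y} ≤ γ)
    (hlim : Tendsto useq atTop (nhds u)) :
    sInf {y : ℝ | ∃ lam : Fin n → ℝ, (∑ i, lam i) = 1 + u ∧ f lam = y} ≤ γ := by
  obtain ⟨B, hB⟩ := global_lower_bound n f hfc hcoercive
  -- each S_j is nonempty
  have hSne : ∀ v : ℝ, {y : ℝ | ∃ lam : Fin n → ℝ,
      (∑ i, lam i) = 1 + v ∧ f lam = y}.Nonempty := by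
    intro v
    refine ⟨f (fun _ => (1 + v) / n), fun _ => (1 + v) / n, ?_, rfl⟩
    rw [Finset.sum_const]
    simp
    field_simp
  -- choose near-infimum points
  have hchoice : ∀ j : ℕ, ∃ ξ : Fin n → ℝ,
      (∑ i, ξ i) = 1 + useq j ∧ f ξ < γ + 1 / (j + 1) := by
    intro j
    have hpos : (0 : ℝ) < 1 / (j + 1) := by positivity
    obtain ⟨y, hy, hylt⟩ := Real.lt_sInf_add_pos (hSne (useq j)) hpos
    obtain ⟨ξ, hsum, hfξ⟩ := hy
    exact ⟨ξ, hsum, by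
      have := hle j
      calc f ξ = y := hfξ
      _ < _ := hylt
      _ ≤ γ + 1 / (j + 1) := by linarith⟩
  choose ξ hξsum hξlt using hchoice
  -- boundedness
  obtain ⟨R, hR⟩ := hcoercive (γ + 2)
  have hmem : ∀ j, ξ j ∈ Metric.closedBall (0 : Fin n → ℝ) (max R 0) := by
    intro j
    rw [Metric.mem_closedBall, dist_zero_right]
    refine le_max_of_le_left ?_
    by_contra h
    push_neg at h
    have h1 := hR (ξ j) h.le
    have h2 : (1 : ℝ) / (j + 1) ≤ 1 := by
      rw [div_le_one (by positivity)]; linarith [Nat.cast_nonneg (α := ℝ) j]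
    linarith [hξlt j]
  obtain ⟨xiL, hmemcl, φ, hφmono, hφtend⟩ :=
    (isCompact_closedBall (0 : Fin n → ℝ) (max R 0)).tendsto_subseq hmem
  -- sum of limit
  have hsumcont : Continuous (fun x : Fin n → ℝ => ∑ i, x i) :=
    continuous_finset_sum _ (fun i _ => continuous_apply i)
  have hsumlim : Tendsto (fun j => ∑ i, ξ (φ j) i) atTop (nhds (∑ i, xiL i)) :=
    (hsumcont.tendsto _).comp hφtend
  have hsumlim' : Tendsto (fun j => ∑ i, ξ (φ j) i) atTop (nhds (1 + u)) := by
    have : (fun j => ∑ i, ξ (φ j) i) = (fun j => 1 + useq (φ j)) := by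
      funext j; exact hξsum (φ j)
    rw [this]
    exact (tendsto_const_nhds.add (hlim.comp hφmono.tendsto_atTop))
  have hsumL : (∑ i, xiL i) = 1 + u := tendsto_nhds_unique hsumlim hsumlim'
  -- f at limit ≤ γ
  have hflim : Tendsto (fun j => f (ξ (φ j))) atTop (nhds (f xiL)) :=
    (hfc.tendsto _).comp hφtend
  have hfle : f xiL ≤ γ := by
    have hub : Tendsto (fun j : ℕ => γ + 1 / ((j : ℝ) + 1)) atTop (nhds γ) := by
      have h := (tendsto_const_nhds (x := γ) (f := atTop)).add
        tendsto_one_div_add_atTop_nhds_zero_nat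
      simpa using h
    refine le_of_tendsto_of_tendsto' hflim hub (fun j => ?_)
    have hφj : (j : ℝ) ≤ (φ j : ℝ) := by exact_mod_cast (hφmono.id_le j)
    have : (1 : ℝ) / ((φ j : ℝ) + 1) ≤ 1 / ((j : ℝ) + 1) := by
      apply one_div_le_one_div_of_le (by positivity)
      linarith
    linarith [hξlt (φ j)]
  -- conclude
  have hbdd : BddBelow {y : ℝ | ∃ lam : Fin n → ℝ, (∑ i, lam i) = 1 + u ∧ f lam = y} :=
    ⟨B, fun y ⟨lam, _, hfl⟩ => hfl ▸ hB lam⟩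
  exact le_trans (csInf_le hbdd ⟨xiL, hsumL, rfl⟩) hfle
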